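/- Fix a capacity m ∈ ℕ, a protected type P ∈ {1,2}, a protection level x ∈ ℕ, and per-agent rewards r₁ ≥ r₂ ≥ 0 (reals). Fix counts n₁, n₂ ∈ ℕ. Let I_order be the arrival list consisting of n₂ type-2 entries followed by n₁ type-1 entries, and let I be an arbitrary arrival list containing exactly n₁ type-1 entries and n₂ type-2 entries. Then the reward of the protection-level policy on I_order is less than or equal to its reward on I. -/
import Mathlib


inductive AgentType : Type
  | one : AgentType
  | two : AgentType
deriving DecidableEq

/-- One step of the protection-level policy with capacity `m`, protected type
`P` and protection level `x`: given current accepted counts `(a₁, a₂)` and an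
arriving agent of type `t`, a protected-type agent is accepted iff
`a₁ + a₂ < m`, while an agent of the other type `Q` is accepted iff
`a_Q < m - x` and `a₁ + a₂ < m`. -/
def stepPolicy (m : ℕ) (P : AgentType) (x : ℕ) (s : ℕ × ℕ) (t : AgentType) : ℕ × ℕ :=
  if t = P then
    if s.1 + s.2 < m then
      (if t = AgentType.one then (s.1 + 1, s.2) else (s.1, s.2 + 1))
    else s
  else
    if (if t = AgentType.one then s.1 else s.2) < m - x ∧ s.1 + s.2 < m then
      (if t = AgentType.one then (s.1 + 1, s.2) else (s.1, s.2 + 1))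
    else s

/-- Final accepted counts `(a₁, a₂)` of the protection-level policy processing
the arrival list `I` from left to right, starting from `(0, 0)`. -/
def runPolicy (m : ℕ) (P : AgentType) (x : ℕ) (I : List AgentType) : ℕ × ℕ :=
  I.foldl (stepPolicy m P x) (0, 0)

/-- Reward of the protection-level policy on arrival list `I` with per-agent
rewards `r₁` (type 1) and `r₂` (type 2). -/
noncomputable def policyReward (m : ℕ) (P : AgentType) (x : ℕ) (r₁ r₂ : ℝ)
    (I : List AgentType) : ℝ :=
  ((runPolicy m P x I).1 : ℝ) * r₁ + ((runPolicy m P x I).2 : ℝ) * r₂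

lemma step_full (m : ℕ) (P : AgentType) (x : ℕ) (s : ℕ × ℕ) (t : AgentType)
    (h : m ≤ s.1 + s.2) : stepPolicy m P x s t = s := by
  cases t <;> cases P <;> simp [stepPolicy] <;> omega

lemma foldl_full (m : ℕ) (P : AgentType) (x : ℕ) (s : ℕ × ℕ)
    (h : m ≤ s.1 + s.2) (L : List AgentType) :
    L.foldl (stepPolicy m P x) s = s := by
  induction L with
  | nil => rfl
  | cons t L ih => simp [List.foldl_cons, step_full m P x s t h, ih]

lemma swap_key (m : ℕ) (P : AgentType) (x : ℕ) (a b : ℕ) :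
    stepPolicy m P x (stepPolicy m P x (a, b) .two) .one
      = stepPolicy m P x (stepPolicy m P x (a, b) .one) .two ∨
    (stepPolicy m P x (stepPolicy m P x (a, b) .one) .two = (a + 1, b) ∧
     stepPolicy m P x (stepPolicy m P x (a, b) .two) .one = (a, b + 1) ∧
     a + 1 + b = m) := by
  cases P <;> simp only [stepPolicy] <;> split_ifs <;> simp_all <;> omega

lemma swap_reward_le (m : ℕ) (P : AgentType) (x : ℕ) (r₁ r₂ : ℝ)
    (hr : r₂ ≤ r₁) (L₁ L₂ : List AgentType) :
    policyReward m P x r₁ r₂ (L₁ ++ .two :: .one :: L₂)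
      ≤ policyReward m P x r₁ r₂ (L₁ ++ .one :: .two :: L₂) := by
  unfold policyReward runPolicy
  rw [List.foldl_append, List.foldl_append]
  obtain ⟨a, b⟩ : ℕ × ℕ := L₁.foldl (stepPolicy m P x) (0, 0)
  simp only [List.foldl_cons]
  rcases swap_key m P x a b with h | ⟨h1, h2, h3⟩
  · rw [h]
  · rw [h1, h2, foldl_full m P x _ (by simp; omega), foldl_full m P x _ (by simp; omega)]
    simp only
    push_cast
    nlinarith [hr]

/-- inversion count -/
def inv2 : List AgentType → ℕ
  | [] => 0
  | .one :: l => l.count .two + inv2 l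
  | .two :: l => inv2 l

lemma inv2_swap (L₁ L₂ : List AgentType) :
    inv2 (L₁ ++ .one :: .two :: L₂) = inv2 (L₁ ++ .two :: .one :: L₂) + 1 := by
  induction L₁ with
  | nil => simp [inv2, List.count_cons]; omega
  | cons t L ih =>
    cases t <;> simp [inv2, ih, List.count_append, List.count_cons] <;> omega

lemma count_swap (t : AgentType) (L₁ L₂ : List AgentType) :
    (L₁ ++ .two :: .one :: L₂).count t = (L₁ ++ .one :: .two :: L₂).count t := by
  simp [List.count_append, List.count_cons]; omega

lemma sorted_or_swap (I : List AgentType) :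
    I = List.replicate (I.count .two) .two ++ List.replicate (I.count .one) .one ∨
    ∃ L₁ L₂, I = L₁ ++ .one :: .two :: L₂ := by
  induction I with
  | nil => left; simp
  | cons t l ih =>
    rcases ih with h | ⟨L₁, L₂, h⟩
    · cases t with
      | two =>
        left
        have c2 : (AgentType.two :: l).count .two = l.count .two + 1 := by
          simp [List.count_cons]
        have c1 : (AgentType.two :: l).count .one = l.count .one := by
          simp [List.count_cons]
        rw [c1, c2, List.replicate_succ, List.cons_append]
        exact congrArg (AgentType.two :: ·) h
      | one =>
        rcases Nat.eq_zero_or_pos (l.count .two) with h0 | h0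
        · left
          have c2 : (AgentType.one :: l).count .two = 0 := by
            simp [List.count_cons, h0]
          have c1 : (AgentType.one :: l).count .one = l.count .one + 1 := by
            simp [List.count_cons]
          rw [c1, c2]
          simp only [h0, List.replicate_zero, List.nil_append] at h
          rw [List.replicate_succ, List.replicate_zero, List.nil_append]
          exact congrArg (AgentType.one :: ·) h
        · right
          refine ⟨[], ?_⟩
          have : l.count .two ≠ 0 := by omega
          rcases Nat.exists_eq_add_of_lt h0 with ⟨k, hk⟩
          rw [h]
          cases hc : l.count AgentType.two with
          | zero => omega
          | succ k =>
            exact ⟨List.replicate k .two ++ List.replicate (l.count .one) .one, by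
              rw [hc] at h; simp [List.replicate_succ] ⟩
    · right; exact ⟨t :: L₁, L₂, by rw [h]; rfl⟩

/-- Lemma 1 of the paper (worst order): the ordered arrival list with all
`n₂` type-2 agents first, followed by `n₁` type-1 agents, minimizes the
protection-level policy's reward among all arrival lists with the same type
counts. -/
theorem worst_order (m : ℕ) (P : AgentType) (x : ℕ) (r₁ r₂ : ℝ)
    (hr : r₂ ≤ r₁) (hr₂ : 0 ≤ r₂) (n₁ n₂ : ℕ) (I : List AgentType)
    (h1 : I.count AgentType.one = n₁) (h2 : I.count AgentType.two = n₂) :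
    policyReward m P x r₁ r₂
        (List.replicate n₂ AgentType.two ++ List.replicate n₁ AgentType.one)
      ≤ policyReward m P x r₁ r₂ I := by
  subst h1 h2
  suffices H : ∀ n I, inv2 I = n → policyReward m P x r₁ r₂
      (List.replicate (I.count AgentType.two) AgentType.two ++
        List.replicate (I.count AgentType.one) AgentType.one)
      ≤ policyReward m P x r₁ r₂ I from H (inv2 I) I rfl
  intro n
  induction n using Nat.strong_induction_on with
  | _ n ih =>
    intro I hn
    rcases sorted_or_swap I with h | ⟨L₁, L₂, h⟩
    · rw [← h]
    · subst h
      have hle := swap_reward_le m P x r₁ r₂ hr L₁ L₂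
      have hinv := inv2_swap L₁ L₂
      have hc1 := count_swap .one L₁ L₂
      have hc2 := count_swap .two L₁ L₂
      refine le_trans ?_ hle
      rw [← hc1, ← hc2]
      exact ih (inv2 (L₁ ++ .two :: .one :: L₂)) (by omega) _ rfl
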